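/- Let T be a Set-functor and let Λ be a set of monotone fuzzy predicate liftings for T. Then the Kantorovich lifting K_Λ is a fuzzy lax extension of T, i.e. it satisfies (L1) R₁ ≤ R₂ implies K_Λ R₁ ≤ K_Λ R₂, (L2) K_Λ(R;S) ≤ K_Λ R ; K_Λ S, and (L3) K_Λ(gr f) ≤ gr(Tf) and K_Λ((gr f)˘) ≤ (gr Tf)˘. If Λ is closed under duals, then K_Λ preserves converse: K_Λ(R˘) = (K_Λ R)˘. If all λ ∈ Λ are nonexpansive, then K_Λ is nonexpansive: K_Λ Δ_{ε,A} ≤ Δ_{ε,TA} for all A and ε > 0. -/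
import Mathlib


open unitInterval

noncomputable section

instance : Fact ((0:ℝ) ≤ 1) := ⟨zero_le_one⟩

/-- A fuzzy relation between `A` and `B` is a map `A × B → [0,1]`. -/
abbrev FRel (A B : Type) : Type := A → B → I

/-- Clamp a real number into the unit interval. -/
def clamp (x : ℝ) : I := Set.projIcc 0 1 zero_le_one x

/-- Composition of fuzzy relations: `(R;S)(a,c) = inf_b min(R(a,b) + S(b,c), 1)`. -/
def fcomp {A B C : Type} (R : FRel A B) (S : FRel B C) : FRel A C :=
  fun a c => ⨅ b : B, clamp ((R a b : ℝ) + (S b c : ℝ))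

/-- Converse of a fuzzy relation. -/
def fconv {A B : Type} (R : FRel A B) : FRel B A := fun b a => R a b

open scoped Classical in
/-- The `ε`-graph of a function. -/
def fgraphE {A B : Type} (ε : I) (f : A → B) : FRel A B :=
  fun a b => if f a = b then ε else 1

/-- The graph of a function. -/
def fgraph {A B : Type} (f : A → B) : FRel A B := fgraphE 0 f

/-- The `ε`-diagonal. -/
def fdiagE (ε : I) (A : Type) : FRel A A := fgraphE ε (id : A → A)

/-- The diagonal. -/
def fdiag (A : Type) : FRel A A := fgraph (id : A → A)

/-- A Set-functor. -/
structure SetFunctor where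
  obj : Type → Type
  map : {A B : Type} → (A → B) → obj A → obj B
  map_id : ∀ (A : Type), map (id : A → A) = id
  map_comp : ∀ {A B C : Type} (f : A → B) (g : B → C), map (g ∘ f) = map g ∘ map f

/-- A fuzzy lax extension of a Set-functor. -/
structure LaxExt (T : SetFunctor) where
  lift : {A B : Type} → FRel A B → FRel (T.obj A) (T.obj B)
  mono : ∀ {A B : Type} (R S : FRel A B), R ≤ S → lift R ≤ lift S
  lax_comp : ∀ {A B C : Type} (R : FRel A B) (S : FRel B C),
    lift (fcomp R S) ≤ fcomp (lift R) (lift S)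
  lax_graph : ∀ {A B : Type} (f : A → B), lift (fgraph f) ≤ fgraph (T.map f)
  lax_graph_conv : ∀ {A B : Type} (f : A → B),
    lift (fconv (fgraph f)) ≤ fconv (fgraph (T.map f))

end

/-- A pair `(f,g)` is `R`-nonexpansive if `f(a) − g(b) ≤ R(a,b)` for all `a, b`. -/
def RNonexp {A B : Type} (R : FRel A B) (f : A → I) (g : B → I) : Prop :=
  ∀ a b, (f a : ℝ) - (g b : ℝ) ≤ (R a b : ℝ)

/-- The nonexpansive companion `R[f](b) = sup_a max(f(a) − R(a,b), 0)`. -/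
noncomputable def companion {A B : Type} (R : FRel A B) (f : A → I) : B → I :=
  fun b => ⨆ a : A, clamp ((f a : ℝ) - (R a b : ℝ))

/-- An `n`-ary fuzzy predicate lifting for `T`: a natural transformation `Q^n ⇒ Q ∘ T`,
where `QX = (X → [0,1])` is the contravariant fuzzy powerset functor. -/
structure PredLift (T : SetFunctor) (n : ℕ) where
  app : (X : Type) → (Fin n → (X → I)) → T.obj X → I
  natural : ∀ {X Y : Type} (f : X → Y) (g : Fin n → (Y → I)) (t : T.obj X),
    app X (fun i => (g i) ∘ f) t = app Y g (T.map f t)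

/-- A predicate lifting is monotone if it preserves the pointwise order in each argument. -/
def PredLiftMonotone (T : SetFunctor) {n : ℕ} (l : PredLift T n) : Prop :=
  ∀ (X : Type) (f g : Fin n → (X → I)), (∀ i, f i ≤ g i) → ∀ t, l.app X f t ≤ l.app X g t

/-- A predicate lifting is nonexpansive if the sup-norm of `λ(f) − λ(g)` is bounded by the
maximum over `i` of the sup-norm of `fᵢ − gᵢ`. -/
def PredLiftNonexp (T : SetFunctor) {n : ℕ} (l : PredLift T n) : Prop :=
  ∀ (X : Type) (f g : Fin n → (X → I)) (t : T.obj X),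
    |(l.app X f t : ℝ) - (l.app X g t : ℝ)| ≤
      ⨆ p : Fin n × X, |(f p.1 p.2 : ℝ) - (g p.1 p.2 : ℝ)|

/-- The dual predicate lifting `λ̄(f₁,…,fₙ) = 1 − λ(1−f₁,…,1−fₙ)`. -/
def PredLift.dual {T : SetFunctor} {n : ℕ} (l : PredLift T n) : PredLift T n where
  app X f t := unitInterval.symm (l.app X (fun i x => unitInterval.symm (f i x)) t)
  natural := by
    intro X Y f g t
    exact congrArg unitInterval.symm
      (l.natural f (fun i y => unitInterval.symm (g i y)) t)

/-- The Kantorovich lifting induced by a set `Λ` of predicate liftings. -/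
noncomputable def kantorovich (T : SetFunctor) (Λ : Set (Σ n, PredLift T n))
    {A B : Type} (R : FRel A B) : FRel (T.obj A) (T.obj B) :=
  fun t₁ t₂ => ⨆ l : Λ,
    ⨆ fg : {fg : (Fin l.1.1 → (A → I)) × (Fin l.1.1 → (B → I)) //
        ∀ i, RNonexp R (fg.1 i) (fg.2 i)},
      clamp ((l.1.2.app A fg.1.1 t₁ : ℝ) - (l.1.2.app B fg.1.2 t₂ : ℝ))

namespace KantProof
open unitInterval

lemma coe_clamp (x : ℝ) : (clamp x : ℝ) = max 0 (min 1 x) := rfl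

lemma clamp_le {x : ℝ} {y : I} (h : x ≤ (y : ℝ)) : clamp x ≤ y := by
  rw [← Subtype.coe_le_coe, coe_clamp]
  exact max_le y.2.1 (le_trans (min_le_right _ _) h)

lemma le_clamp {x : ℝ} (h : x ≤ 1) : x ≤ (clamp x : ℝ) := by
  rw [coe_clamp]
  exact le_max_of_le_right (le_min h le_rfl)

lemma clamp_mono {x y : ℝ} (h : x ≤ y) : clamp x ≤ clamp y := by
  rw [← Subtype.coe_le_coe, coe_clamp, coe_clamp]
  exact max_le_max le_rfl (min_le_min le_rfl h)

lemma clamp_nonpos {x : ℝ} (h : x ≤ 0) : clamp x = 0 :=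
  le_antisymm (clamp_le (by simpa using h)) nonneg'

lemma clamp_le_self {x : ℝ} (h : 0 ≤ x) : (clamp x : ℝ) ≤ x := by
  rw [coe_clamp]
  exact max_le h (min_le_right _ _)

lemma le_kant (T : SetFunctor) (Λ : Set (Σ n, PredLift T n)) {A B : Type} {R : FRel A B}
    (t1 : T.obj A) (t2 : T.obj B) (l : Σ n, PredLift T n) (hl : l ∈ Λ)
    (f : Fin l.1 → A → I) (g : Fin l.1 → B → I) (hfg : ∀ i, RNonexp R (f i) (g i)) :
    (l.2.app A f t1 : ℝ) - (l.2.app B g t2 : ℝ) ≤ (kantorovich T Λ R t1 t2 : ℝ) := by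
  have h1 : clamp ((l.2.app A f t1 : ℝ) - (l.2.app B g t2 : ℝ)) ≤ kantorovich T Λ R t1 t2 :=
    le_iSup_of_le ⟨l, hl⟩ (le_iSup_of_le ⟨(f, g), hfg⟩ le_rfl)
  refine le_trans (le_clamp ?_) (Subtype.coe_le_coe.mpr h1)
  have h2 := (l.2.app A f t1).2.2
  have h3 := (l.2.app B g t2).2.1
  linarith

lemma kant_le (T : SetFunctor) (Λ : Set (Σ n, PredLift T n)) {A B : Type} {R : FRel A B}
    {t1 : T.obj A} {t2 : T.obj B} {y : I}
    (h : ∀ l, l ∈ Λ → ∀ (f : Fin l.1 → A → I) (g : Fin l.1 → B → I),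
      (∀ i, RNonexp R (f i) (g i)) →
      (l.2.app A f t1 : ℝ) - (l.2.app B g t2 : ℝ) ≤ (y : ℝ)) :
    kantorovich T Λ R t1 t2 ≤ y :=
  iSup_le fun l => iSup_le fun fg => clamp_le (h l.1 l.2 fg.1.1 fg.1.2 fg.2)

end KantProof

/-- the Kantorovich lifting of a set of monotone predicate liftings is a fuzzy
lax extension; it preserves converse if `Λ` is closed under duals, and it is nonexpansive if
all liftings in `Λ` are nonexpansive. -/
theorem kantorovich_is_lax_extension (T : SetFunctor) (Λ : Set (Σ n, PredLift T n))
    (hmono : ∀ l ∈ Λ, PredLiftMonotone T l.2) :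
    (∀ (A B : Type) (R₁ R₂ : FRel A B), R₁ ≤ R₂ →
      kantorovich T Λ R₁ ≤ kantorovich T Λ R₂) ∧
    (∀ (A B C : Type) (R : FRel A B) (S : FRel B C),
      kantorovich T Λ (fcomp R S) ≤ fcomp (kantorovich T Λ R) (kantorovich T Λ S)) ∧
    (∀ (A B : Type) (f : A → B),
      kantorovich T Λ (fgraph f) ≤ fgraph (T.map f) ∧
      kantorovich T Λ (fconv (fgraph f)) ≤ fconv (fgraph (T.map f))) ∧
    ((∀ l ∈ Λ, (⟨l.1, PredLift.dual l.2⟩ : Σ n, PredLift T n) ∈ Λ) →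
      ∀ (A B : Type) (R : FRel A B),
        kantorovich T Λ (fconv R) = fconv (kantorovich T Λ R)) ∧
    ((∀ l ∈ Λ, PredLiftNonexp T l.2) →
      ∀ (A : Type) (ε : I), 0 < ε →
        kantorovich T Λ (fdiagE ε A) ≤ fdiagE ε (T.obj A)) := by

  open KantProof in
  refine ⟨?_, ?_, ?_, ?_, ?_⟩
  · -- (L1) monotonicity
    intro A B R₁ R₂ h t1 t2
    refine iSup_le fun l => iSup_le fun fg => ?_
    exact le_iSup_of_le l (le_iSup_of_le
      ⟨fg.1, fun i a b => le_trans (fg.2 i a b) (Subtype.coe_le_coe.mpr (h a b))⟩ le_rfl)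
  · -- (L2) lax composition
    intro A B C R S t1 t3
    refine iSup_le fun l => iSup_le fun fg => le_iInf fun t2 => ?_
    obtain ⟨⟨f, h⟩, hfh⟩ := fg
    have hcomp : ∀ (i : Fin l.1.1) (b : B),
        companion R (f i) b = ⨆ a : A, clamp ((f i a : ℝ) - (R a b : ℝ)) := fun i b => rfl
    have hfg : ∀ i, RNonexp R (f i) (fun b => companion R (f i) b) := by
      intro i a b
      have h1 : clamp ((f i a : ℝ) - (R a b : ℝ)) ≤ companion R (f i) b := by
        rw [hcomp]; exact le_iSup (fun a' : A => clamp ((f i a' : ℝ) - (R a' b : ℝ))) a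
      have h2 : (f i a : ℝ) - (R a b : ℝ) ≤ (clamp ((f i a : ℝ) - (R a b : ℝ)) : ℝ) := by
        refine le_clamp ?_
        have := (f i a).2.2; have := (R a b).2.1; linarith
      have h3 := Subtype.coe_le_coe.mpr h1
      linarith
    have hgh : ∀ i, RNonexp S (fun b => companion R (f i) b) (h i) := by
      intro i b c
      have key : ∀ a, (f i a : ℝ) - (R a b : ℝ) ≤ (h i c : ℝ) + (S b c : ℝ) := by
        intro a
        have h1 : (f i a : ℝ) - (h i c : ℝ) ≤ (fcomp R S a c : ℝ) := hfh i a c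
        have h2 : fcomp R S a c ≤ clamp ((R a b : ℝ) + (S b c : ℝ)) := iInf_le _ b
        have h3 := Subtype.coe_le_coe.mpr h2
        have h4 : (clamp ((R a b : ℝ) + (S b c : ℝ)) : ℝ) ≤ (R a b : ℝ) + (S b c : ℝ) :=
          clamp_le_self (add_nonneg (R a b).2.1 (S b c).2.1)
        linarith
      have h5 : companion R (f i) b ≤ clamp ((h i c : ℝ) + (S b c : ℝ)) := by
        rw [hcomp]; exact iSup_le fun a => clamp_mono (key a)
      have h6 := Subtype.coe_le_coe.mpr h5
      have h7 : (clamp ((h i c : ℝ) + (S b c : ℝ)) : ℝ) ≤ (h i c : ℝ) + (S b c : ℝ) :=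
        clamp_le_self (add_nonneg (h i c).2.1 (S b c).2.1)
      linarith
    have h1 := le_kant T Λ t1 t2 l.1 l.2 f (fun i b => companion R (f i) b) hfg
    have h2 := le_kant T Λ t2 t3 l.1 l.2 (fun i b => companion R (f i) b) h hgh
    exact clamp_mono (by linarith)
  · -- (L3) graphs
    intro A B f
    constructor
    · intro t1 t2
      by_cases he : T.map f t1 = t2
      · subst he
        have hval : fgraph (T.map f) t1 (T.map f t1) = 0 := by
          simp [fgraph, fgraphE]
        rw [hval]
        refine kant_le T Λ fun l hl u v huv => ?_
        have hle : ∀ i, u i ≤ fun a => v i (f a) := by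
          intro i a
          have h1 := huv i a (f a)
          have h2 : fgraph f a (f a) = 0 := by simp [fgraph, fgraphE]
          rw [h2] at h1
          have h0 : ((0:I) : ℝ) = 0 := rfl
          rw [h0] at h1
          exact Subtype.coe_le_coe.mp (by linarith)
        have h3 : l.2.app A u t1 ≤ l.2.app A (fun i => v i ∘ f) t1 :=
          hmono l hl A u (fun i => v i ∘ f) hle t1
        have h4 := l.2.natural f v t1
        rw [h4] at h3
        have := Subtype.coe_le_coe.mpr h3
        simpa using this
      · have hval : fgraph (T.map f) t1 t2 = 1 := by
          simp [fgraph, fgraphE, he]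
        rw [hval]
        exact le_one'
    · intro t2 t1
      by_cases he : T.map f t1 = t2
      · subst he
        have hval : fconv (fgraph (T.map f)) (T.map f t1) t1 = 0 := by
          simp [fconv, fgraph, fgraphE]
        rw [hval]
        refine kant_le T Λ fun l hl u v huv => ?_
        have hle : ∀ i, (fun a => u i (f a)) ≤ v i := by
          intro i a
          have h1 := huv i (f a) a
          have h2 : fconv (fgraph f) (f a) a = 0 := by simp [fconv, fgraph, fgraphE]
          rw [h2] at h1
          have h0 : ((0:I) : ℝ) = 0 := rfl
          rw [h0] at h1
          exact Subtype.coe_le_coe.mp (by linarith)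
        have h3 : l.2.app A (fun i => u i ∘ f) t1 ≤ l.2.app A v t1 :=
          hmono l hl A (fun i => u i ∘ f) v hle t1
        have h4 := l.2.natural f u t1
        rw [h4] at h3
        have := Subtype.coe_le_coe.mpr h3
        simpa using this
      · have hval : fconv (fgraph (T.map f)) t2 t1 = 1 := by
          simp [fconv, fgraph, fgraphE, he]
        rw [hval]
        exact le_one'
  · -- converse under duals
    intro hdual A B R
    have conv_le : ∀ {A B : Type} (R : FRel A B) (t1 : T.obj A) (t2 : T.obj B),
        kantorovich T Λ (fconv R) t2 t1 ≤ kantorovich T Λ R t1 t2 := by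
      intro A B R t1 t2
      refine kant_le T Λ fun l hl u v huv => ?_
      have hl' := hdual l hl
      have hnon : ∀ i, RNonexp R (fun x => σ (v i x)) (fun x => σ (u i x)) := by
        intro i a b
        have h1 := huv i b a
        simp only [coe_symm_eq]
        have : (fconv R b a : ℝ) = (R a b : ℝ) := rfl
        linarith [h1.trans_eq this]
      have h2 := le_kant T Λ t1 t2 ⟨l.1, l.2.dual⟩ hl'
        (fun i x => σ (v i x)) (fun i x => σ (u i x)) hnon
      simp only [PredLift.dual, symm_symm, coe_symm_eq] at h2
      linarith
    funext t2 t1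
    refine le_antisymm (conv_le R t1 t2) ?_
    exact conv_le (fconv R) t2 t1
  · -- nonexpansiveness
    intro hnonexp A ε hε t1 t2
    by_cases he : t1 = t2
    · subst he
      have hval : fdiagE ε (T.obj A) t1 t1 = ε := by simp [fdiagE, fgraphE]
      rw [hval]
      refine kant_le T Λ fun l hl f g hfg => ?_
      set h : Fin l.1 → A → I := fun i => f i ⊔ g i with hh
      have hfh : ∀ i, f i ≤ h i := fun i => le_sup_left
      have hm : l.2.app A f t1 ≤ l.2.app A h t1 := hmono l hl A f h hfh t1
      have hdiff : ∀ (i : Fin l.1) (a : A), (f i a : ℝ) - (g i a : ℝ) ≤ (ε : ℝ) := by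
        intro i a
        have h1 := hfg i a a
        have h2 : fdiagE ε A a a = ε := by simp [fdiagE, fgraphE]
        rw [h2] at h1
        exact h1
      have hsup : (⨆ p : Fin l.1 × A, |(h p.1 p.2 : ℝ) - (g p.1 p.2 : ℝ)|) ≤ (ε : ℝ) := by
        refine Real.iSup_le (fun p => ?_) ε.2.1
        obtain ⟨i, a⟩ := p
        rcases le_total (f i a) (g i a) with hc | hc
        · have : h i a = g i a := by
            show f i a ⊔ g i a = g i a
            exact sup_eq_right.mpr hc
          rw [this]
          simpa using ε.2.1
        · have hEq : h i a = f i a := by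
            show f i a ⊔ g i a = f i a
            exact sup_eq_left.mpr hc
          rw [hEq, abs_of_nonneg (by simpa using Subtype.coe_le_coe.mpr hc)]
          exact hdiff i a
      have hne := hnonexp l hl A h g t1
      have h3 : (l.2.app A h t1 : ℝ) - (l.2.app A g t1 : ℝ) ≤ (ε : ℝ) :=
        le_trans (le_trans (le_abs_self _) hne) hsup
      have h4 := Subtype.coe_le_coe.mpr hm
      linarith
    · have hval : fdiagE ε (T.obj A) t1 t2 = 1 := by simp [fdiagE, fgraphE, he]
      rw [hval]
      exact le_one'
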